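/- arXiv:2106.16216 — 3 statements merged into one kernel-verified Lean document; each statement's English description precedes it below -/
import Mathlib

section
/- Let d = d₁·d₂ with d₁,d₂ ≥ 2, and let φ₁,…,φ_{m} be any m ≤ max(d₁,d₂)+1 unit vectors in ℂ^d. Then there exists a unitary U ∈ U(d) such that every Uφ_i is a product state with respect to the bipartition ℂ^{d₁}⊗ℂ^{d₂}. In particular, no set of at most max(d₁,d₂)+1 pure states is absolutely entangled. -/
open scoped InnerProductSpace ComplexConjugate

/-- A vector of `ℂ^{d₁} ⊗ ℂ^{d₂}` (coefficients in the product basis indexed by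
`Fin d₁ × Fin d₂`) is a product state if its coefficients factorize. -/
def IsProductState (d₁ d₂ : ℕ) (ψ : EuclideanSpace ℂ (Fin d₁ × Fin d₂)) : Prop :=
  ∃ (x : Fin d₁ → ℂ) (y : Fin d₂ → ℂ), ∀ p : Fin d₁ × Fin d₂, ψ p = x p.1 * y p.2

lemma isProduct_of_single_col {d₁ d₂ : ℕ} (ψ : EuclideanSpace ℂ (Fin d₁ × Fin d₂))
    (j₀ : Fin d₂) (h : ∀ p : Fin d₁ × Fin d₂, p.2 ≠ j₀ → ψ p = 0) :
    IsProductState d₁ d₂ ψ := by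
  refine ⟨fun a => ψ (a, j₀), fun j => if j = j₀ then 1 else 0, fun p => ?_⟩
  by_cases hj : p.2 = j₀
  · have hpp : (p.1, j₀) = p := by rw [← hj]
    rw [← hpp]
    simp
  · simp [hj, h p hj]

set_option maxHeartbeats 1000000 in
lemma main_aux (d₁ d₂ m : ℕ) (hd₁ : 2 ≤ d₁) (hd₂ : 2 ≤ d₂) (hm : m ≤ d₁ + 1)
    (φ : Fin m → EuclideanSpace ℂ (Fin d₁ × Fin d₂)) :
    ∃ U : EuclideanSpace ℂ (Fin d₁ × Fin d₂) ≃ₗᵢ[ℂ] EuclideanSpace ℂ (Fin d₁ × Fin d₂),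
      ∀ i, IsProductState d₁ d₂ (U (φ i)) := by
  classical
  cases m with
  | zero => exact ⟨LinearIsometryEquiv.refl ℂ _, fun i => i.elim0⟩
  | succ m' =>
  obtain ⟨i₀, hi₀⟩ : ∃ i₀ : Fin (m' + 1), i₀ = Fin.last m' := ⟨_, rfl⟩
  obtain ⟨V, hVmem, hVle0⟩ :
      ∃ V : Submodule ℂ (EuclideanSpace ℂ (Fin d₁ × Fin d₂)),
        (∀ i : Fin (m' + 1), i ≠ i₀ → φ i ∈ V) ∧ Module.finrank ℂ V ≤ d₁ := by
    refine ⟨Submodule.span ℂ (Set.range fun k : Fin m' => φ k.castSucc), ?_, ?_⟩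
    · intro i hi
      apply Submodule.subset_span
      rw [hi₀] at hi
      exact ⟨i.castPred hi, by simp⟩
    · have h1 := finrank_span_le_card (R := ℂ)
        (Set.range fun k : Fin m' => φ k.castSucc)
      rw [Set.toFinset_card] at h1
      have h2 := Fintype.card_range_le (fun k : Fin m' => φ k.castSucc)
      simp only [Fintype.card_fin] at h2
      omega
  obtain ⟨r', f, hVle, hr'fr⟩ :
      ∃ (r' : ℕ) (_ : OrthonormalBasis (Fin r') ℂ V), r' ≤ d₁ ∧ r' = Module.finrank ℂ V :=
    ⟨Module.finrank ℂ V, stdOrthonormalBasis ℂ V, hVle0, rfl⟩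
  -- distinguished indices
  obtain ⟨e₀, he₀⟩ : ∃ e₀ : Fin d₂, e₀ = ⟨0, by omega⟩ := ⟨_, rfl⟩
  obtain ⟨e₁, he₁⟩ : ∃ e₁ : Fin d₂, e₁ = ⟨1, by omega⟩ := ⟨_, rfl⟩
  obtain ⟨a₀, ha₀⟩ : ∃ a₀ : Fin d₁, a₀ = ⟨0, by omega⟩ := ⟨_, rfl⟩
  have he01 : e₀ ≠ e₁ := by
    rw [he₀, he₁]
    intro h
    exact absurd (congrArg Fin.val h) (by norm_num)
  obtain ⟨ρ, hρinj, hρ2, hρ1⟩ :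
      ∃ ρ : Fin r' → Fin d₁ × Fin d₂, Function.Injective ρ ∧
        (∀ k, (ρ k).2 = e₀) ∧ (∀ k, (ρ k).1.1 = k.1) := by
    refine ⟨fun k => (Fin.castLE hVle k, e₀), ?_, fun k => rfl, fun k => rfl⟩
    intro k l h
    exact Fin.castLE_injective hVle (Prod.ext_iff.mp h).1
  have hρr : ∀ k, (ρ k).1.1 < r' := fun k => by rw [hρ1 k]; exact k.2
  obtain ⟨ι₁, hι₁⟩ : ∃ ι₁ : Fin d₁ × Fin d₂, ι₁ = (a₀, e₁) := ⟨_, rfl⟩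
  have hι₁2 : ι₁.2 = e₁ := by rw [hι₁]
  have hι₁ρ : ∀ k, ρ k ≠ ι₁ := by
    intro k h
    have h2 := congrArg Prod.snd h
    rw [hρ2 k, hι₁2] at h2
    exact he01 h2
  obtain ⟨s, hs⟩ : ∃ s : Set (Fin d₁ × Fin d₂), s = Set.range ρ ∪ {ι₁} := ⟨_, rfl⟩
  have hρs : ∀ k, ρ k ∈ s := fun k => by rw [hs]; exact Or.inl ⟨k, rfl⟩
  have hι₁s : ι₁ ∈ s := by rw [hs]; exact Or.inr rfl
  -- projection data
  obtain ⟨pV, hpV⟩ : ∃ pV : V, pV = V.orthogonalProjectionOnto (φ i₀) := ⟨_, rfl⟩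
  obtain ⟨q, hq⟩ : ∃ q : EuclideanSpace ℂ (Fin d₁ × Fin d₂), q = φ i₀ - pV := ⟨_, rfl⟩
  have hqV : q ∈ Vᗮ := by
    rw [hq, hpV]
    exact Submodule.sub_starProjection_mem_orthogonal (K := V) (φ i₀)
  -- a unit vector orthogonal to V
  obtain ⟨z, hzV, hz1⟩ : ∃ z : EuclideanSpace ℂ (Fin d₁ × Fin d₂), z ∈ Vᗮ ∧ ‖z‖ = 1 := by
    have hne : Vᗮ ≠ ⊥ := by
      intro hbot
      have h1 : Module.finrank ℂ V + Module.finrank ℂ Vᗮ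
          = Module.finrank ℂ (EuclideanSpace ℂ (Fin d₁ × Fin d₂)) :=
        Submodule.finrank_add_finrank_orthogonal V
      rw [hbot] at h1
      simp only [finrank_bot] at h1
      rw [finrank_euclideanSpace] at h1
      simp only [Fintype.card_prod, Fintype.card_fin] at h1
      rw [← hr'fr] at h1
      nlinarith
    obtain ⟨z₀, hz₀V, hz₀⟩ := Submodule.exists_mem_ne_zero_of_ne_bot hne
    refine ⟨(‖z₀‖⁻¹ : ℂ) • z₀, Submodule.smul_mem _ _ hz₀V, ?_⟩
    rw [norm_smul]
    simp [norm_ne_zero_iff.2 hz₀]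
  obtain ⟨f', hf'⟩ : ∃ f' : EuclideanSpace ℂ (Fin d₁ × Fin d₂),
      f' = if q = 0 then z else (‖q‖⁻¹ : ℂ) • q := ⟨_, rfl⟩
  have hf'V : f' ∈ Vᗮ := by
    rw [hf']; split
    · exact hzV
    · exact Submodule.smul_mem _ _ hqV
  have hf'1 : ‖f'‖ = 1 := by
    rw [hf']; split
    · exact hz1
    · rename_i hq0
      rw [norm_smul]
      simp [norm_ne_zero_iff.2 hq0]
  have hqf' : q = (‖q‖ : ℂ) • f' := by
    rw [hf']; split
    · rename_i hq0; simp [hq0]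
    · rename_i hq0
      rw [smul_smul, mul_inv_cancel₀
        (by exact_mod_cast norm_ne_zero_iff.2 hq0 : (‖q‖:ℂ) ≠ 0), one_smul]
  -- coefficients and the product direction w
  obtain ⟨X, hX⟩ : ∃ X : EuclideanSpace ℂ (Fin d₁),
      X = fun a : Fin d₁ => if h : a.1 < r' then f.repr pV ⟨a.1, h⟩ else 0 := ⟨WithLp.toLp 2 _, rfl⟩
  obtain ⟨w, hw⟩ : ∃ w : EuclideanSpace ℂ (Fin d₁),
      w = if X = 0 then EuclideanSpace.single a₀ 1 else (‖X‖⁻¹ : ℂ) • X := ⟨_, rfl⟩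
  have hw1 : ‖w‖ = 1 := by
    rw [hw]; split
    · simp
    · rename_i hX0
      rw [norm_smul]
      simp [norm_ne_zero_iff.2 hX0]
  have hXw : ∀ a, X a = (‖X‖ : ℂ) * w a := by
    intro a
    rw [hw]; split
    · rename_i hX0
      rw [hX0]
      simp
    · rename_i hX0
      have h2 : ((‖X‖⁻¹ : ℂ) • X) a = (‖X‖⁻¹ : ℂ) * X a := rfl
      rw [h2, ← mul_assoc, mul_inv_cancel₀
        (by exact_mod_cast norm_ne_zero_iff.2 hX0 : (‖X‖:ℂ) ≠ 0), one_mul]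
  -- target extra vector
  obtain ⟨g', hg'⟩ : ∃ g' : EuclideanSpace ℂ (Fin d₁ × Fin d₂),
      g' = fun p : Fin d₁ × Fin d₂ => if p.2 = e₁ then w p.1 else 0 := ⟨WithLp.toLp 2 _, rfl⟩
  -- source and target families
  obtain ⟨vsrc, hvsrc⟩ : ∃ vsrc : Fin d₁ × Fin d₂ → EuclideanSpace ℂ (Fin d₁ × Fin d₂),
      vsrc = fun i => if h : i.2 = e₀ ∧ i.1.1 < r' then
        ((f ⟨i.1.1, h.2⟩ : V) : EuclideanSpace ℂ (Fin d₁ × Fin d₂))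
        else if i = ι₁ then f' else 0 := ⟨_, rfl⟩
  obtain ⟨vtgt, hvtgt⟩ : ∃ vtgt : Fin d₁ × Fin d₂ → EuclideanSpace ℂ (Fin d₁ × Fin d₂),
      vtgt = fun i => if i.2 = e₀ ∧ i.1.1 < r' then EuclideanSpace.single i 1
        else if i = ι₁ then g' else 0 := ⟨_, rfl⟩
  have hvsrcρ : ∀ k, vsrc (ρ k) = ((f k : V) : EuclideanSpace ℂ (Fin d₁ × Fin d₂)) := by
    intro k
    have h : (ρ k).2 = e₀ ∧ (ρ k).1.1 < r' := ⟨hρ2 k, hρr k⟩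
    simp only [hvsrc]
    rw [dif_pos h]
    exact congrArg _ (congrArg f (Fin.ext (hρ1 k)))
  have hcondι₁ : ¬(ι₁.2 = e₀ ∧ ι₁.1.1 < r') := by
    rintro ⟨h1, -⟩
    rw [hι₁2] at h1
    exact he01 h1.symm
  have hvsrcι₁ : vsrc ι₁ = f' := by
    simp only [hvsrc]
    rw [dif_neg hcondι₁]
    simp
  have hvtgtρ : ∀ k, vtgt (ρ k) = EuclideanSpace.single (ρ k) 1 := by
    intro k
    simp only [hvtgt]
    rw [if_pos ⟨hρ2 k, hρr k⟩]
  have hvtgtι₁ : vtgt ι₁ = g' := by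
    simp only [hvtgt]
    rw [if_neg hcondι₁]
    simp
  -- inner product facts
  have hg'ρ : ∀ k, g' (ρ k) = 0 := by
    intro k
    simp only [hg']
    rw [hρ2 k]
    exact if_neg he01
  have hg'g' : ⟪g', g'⟫_ℂ = 1 := by
    have h1 : ⟪g', g'⟫_ℂ = ∑ p : Fin d₁ × Fin d₂, conj (g' p) * g' p := by
      simp only [PiLp.inner_apply, RCLike.inner_apply']
    rw [h1, Fintype.sum_prod_type_right]
    have h2 : ∀ j : Fin d₂, (∑ a : Fin d₁, conj (g' (a, j)) * g' (a, j))
        = if j = e₁ then ∑ a : Fin d₁, conj (w a) * w a else 0 := by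
      intro j
      by_cases hj : j = e₁
      · rw [if_pos hj]
        refine Finset.sum_congr rfl (fun a _ => ?_)
        simp only [hg']
        rw [if_pos hj]
      · rw [if_neg hj]
        apply Finset.sum_eq_zero; intro a _
        simp only [hg']
        rw [if_neg hj]
        simp
    calc (∑ j : Fin d₂, ∑ a : Fin d₁, conj (g' (a, j)) * g' (a, j))
        = ∑ j : Fin d₂, if j = e₁ then (∑ a : Fin d₁, conj (w a) * w a) else 0 :=
          Finset.sum_congr rfl (fun j _ => h2 j)
      _ = ∑ a : Fin d₁, conj (w a) * w a := by
          rw [Finset.sum_ite_eq' Finset.univ e₁]; simp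
      _ = ⟪w, w⟫_ℂ := by simp only [PiLp.inner_apply, RCLike.inner_apply']
      _ = 1 := by rw [inner_self_eq_norm_sq_to_K, hw1]; norm_num
  -- orthonormality of the source family
  have hsrc : Orthonormal ℂ (s.domRestrict vsrc) := by
    rw [orthonormal_iff_ite]
    rintro ⟨i, hi⟩ ⟨j, hj⟩
    have hii := hi; have hjj := hj
    rw [hs] at hii hjj
    rcases hii with ⟨k, rfl⟩ | hii
    · rcases hjj with ⟨l, rfl⟩ | hjj
      · rw [Set.domRestrict_apply, Set.domRestrict_apply, hvsrcρ, hvsrcρ,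
          ← Submodule.coe_inner]
        rw [orthonormal_iff_ite.mp f.orthonormal k l]
        by_cases hkl : k = l
        · simp [hkl]
        · rw [if_neg hkl, if_neg]
          simp only [ne_eq, Subtype.mk.injEq]
          exact fun h => hkl (hρinj h)
      · simp only [Set.mem_singleton_iff] at hjj
        subst hjj
        rw [Set.domRestrict_apply, Set.domRestrict_apply, hvsrcρ, hvsrcι₁]
        rw [Submodule.inner_right_of_mem_orthogonal (f k).2 hf'V, if_neg]
        simp only [ne_eq, Subtype.mk.injEq]
        exact hι₁ρ k
    · simp only [Set.mem_singleton_iff] at hii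
      subst hii
      rcases hjj with ⟨l, rfl⟩ | hjj
      · rw [Set.domRestrict_apply, Set.domRestrict_apply, hvsrcι₁, hvsrcρ]
        rw [inner_eq_zero_symm.mp
          (Submodule.inner_right_of_mem_orthogonal (f l).2 hf'V), if_neg]
        simp only [ne_eq, Subtype.mk.injEq]
        exact fun h => hι₁ρ l h.symm
      · simp only [Set.mem_singleton_iff] at hjj
        subst hjj
        rw [Set.domRestrict_apply, hvsrcι₁, if_pos rfl]
        rw [inner_self_eq_norm_sq_to_K, hf'1]
        norm_num
  -- orthonormality of the target family
  have htgt : Orthonormal ℂ (s.domRestrict vtgt) := by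
    rw [orthonormal_iff_ite]
    rintro ⟨i, hi⟩ ⟨j, hj⟩
    have hii := hi; have hjj := hj
    rw [hs] at hii hjj
    rcases hii with ⟨k, rfl⟩ | hii
    · rcases hjj with ⟨l, rfl⟩ | hjj
      · rw [Set.domRestrict_apply, Set.domRestrict_apply, hvtgtρ, hvtgtρ,
          EuclideanSpace.inner_single_left]
        simp only [map_one, one_mul, EuclideanSpace.single_apply]
        by_cases hkl : k = l
        · simp [hkl]
        · rw [if_neg (fun h => hkl (hρinj h)), if_neg]
          simp only [ne_eq, Subtype.mk.injEq]
          exact fun h => hkl (hρinj h)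
      · simp only [Set.mem_singleton_iff] at hjj
        subst hjj
        rw [Set.domRestrict_apply, Set.domRestrict_apply, hvtgtρ, hvtgtι₁,
          EuclideanSpace.inner_single_left, hg'ρ]
        rw [if_neg]
        · ring
        simp only [ne_eq, Subtype.mk.injEq]
        exact hι₁ρ k
    · simp only [Set.mem_singleton_iff] at hii
      subst hii
      rcases hjj with ⟨l, rfl⟩ | hjj
      · rw [Set.domRestrict_apply, Set.domRestrict_apply, hvtgtι₁, hvtgtρ,
          EuclideanSpace.inner_single_right, hg'ρ]
        rw [if_neg]
        · simp
        simp only [ne_eq, Subtype.mk.injEq]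
        exact fun h => hι₁ρ l h.symm
      · simp only [Set.mem_singleton_iff] at hjj
        subst hjj
        rw [Set.domRestrict_apply, hvtgtι₁, if_pos rfl, hg'g']
  -- extend to orthonormal bases
  have card_eq : Module.finrank ℂ (EuclideanSpace ℂ (Fin d₁ × Fin d₂))
      = Fintype.card (Fin d₁ × Fin d₂) := by
    rw [finrank_euclideanSpace]
  obtain ⟨bs, hbs⟩ := hsrc.exists_orthonormalBasis_extension_of_card_eq card_eq
  obtain ⟨bt, hbt⟩ := htgt.exists_orthonormalBasis_extension_of_card_eq card_eq
  obtain ⟨U, hUdef⟩ : ∃ U : EuclideanSpace ℂ (Fin d₁ × Fin d₂) ≃ₗᵢ[ℂ]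
      EuclideanSpace ℂ (Fin d₁ × Fin d₂), U = bs.repr.trans bt.repr.symm := ⟨_, rfl⟩
  refine ⟨U, ?_⟩
  have hUs : ∀ i ∈ s, U (vsrc i) = vtgt i := by
    intro i hi
    rw [← hbs i hi, ← hbt i hi, hUdef, LinearIsometryEquiv.trans_apply,
      OrthonormalBasis.repr_self, OrthonormalBasis.repr_symm_single]
  have hUρ : ∀ k, U (((f k : V)) : EuclideanSpace ℂ (Fin d₁ × Fin d₂))
      = EuclideanSpace.single (ρ k) 1 := by
    intro k
    rw [← hvsrcρ k, hUs (ρ k) (hρs k), hvtgtρ]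
  have hUf' : U f' = g' := by
    rw [← hvsrcι₁, hUs ι₁ hι₁s, hvtgtι₁]
  -- expansion of vectors of V
  have hexp : ∀ v : V, U (v : EuclideanSpace ℂ (Fin d₁ × Fin d₂))
      = ∑ k, (f.repr v k) • EuclideanSpace.single (ρ k) (1:ℂ) := by
    intro v
    conv_lhs => rw [← f.sum_repr v]
    push_cast
    rw [map_sum]
    refine Finset.sum_congr rfl (fun k _ => ?_)
    rw [map_smul, hUρ]
  -- coordinates of such expansions
  have hcoord : ∀ (cc : Fin r' → ℂ) (p : Fin d₁ × Fin d₂),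
      (∑ k, cc k • EuclideanSpace.single (ρ k) (1:ℂ)) p
        = if h : p.2 = e₀ ∧ p.1.1 < r' then cc ⟨p.1.1, h.2⟩ else 0 := by
    intro cc p
    rw [WithLp.ofLp_sum, Finset.sum_apply p Finset.univ (fun k => (cc k • EuclideanSpace.single (ρ k) (1:ℂ)).ofLp)]
    by_cases h : p.2 = e₀ ∧ p.1.1 < r'
    · rw [dif_pos h]
      have hp : p = ρ (⟨p.1.1, h.2⟩ : Fin r') := by
        have h1 := hρ1 (⟨p.1.1, h.2⟩ : Fin r')
        have h2 := hρ2 (⟨p.1.1, h.2⟩ : Fin r')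
        ext
        · exact h1.symm
        · rw [h2]
          exact congrArg Fin.val h.1
      rw [Finset.sum_eq_single (⟨p.1.1, h.2⟩ : Fin r')]
      · have hsm : (cc ⟨p.1.1, h.2⟩ • EuclideanSpace.single (ρ ⟨p.1.1, h.2⟩) (1:ℂ)) p
            = cc ⟨p.1.1, h.2⟩ * (EuclideanSpace.single (ρ ⟨p.1.1, h.2⟩) (1:ℂ)) p := rfl
        rw [hsm, EuclideanSpace.single_apply, if_pos hp]
        ring
      · intro l _ hl
        have hsm : (cc l • EuclideanSpace.single (ρ l) (1:ℂ)) p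
            = cc l * (EuclideanSpace.single (ρ l) (1:ℂ)) p := rfl
        rw [hsm, EuclideanSpace.single_apply,
          if_neg (fun hh => hl (hρinj (hp.symm.trans hh)).symm), mul_zero]
      · intro h'; exact absurd (Finset.mem_univ _) h'
    · rw [dif_neg h]
      apply Finset.sum_eq_zero
      intro k _
      have hsm : (cc k • EuclideanSpace.single (ρ k) (1:ℂ)) p
          = cc k * (EuclideanSpace.single (ρ k) (1:ℂ)) p := rfl
      rw [hsm, EuclideanSpace.single_apply, if_neg, mul_zero]
      intro hp
      apply h
      rw [hp]
      exact ⟨hρ2 k, hρr k⟩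
  -- now prove each image is a product state
  intro i
  by_cases hi : i = i₀
  · -- the distinguished vector
    subst hi
    have hφ : φ i = (pV : EuclideanSpace ℂ (Fin d₁ × Fin d₂)) + (‖q‖ : ℂ) • f' := by
      rw [← hqf', hq]
      abel
    rw [hφ, map_add, map_smul, hUf', hexp pV]
    refine ⟨w, fun j => if j = e₀ then (‖X‖ : ℂ) else if j = e₁ then (‖q‖ : ℂ) else 0, ?_⟩
    intro p
    beta_reduce
    have happ : (∑ k, (f.repr pV k) • EuclideanSpace.single (ρ k) (1:ℂ) + (‖q‖:ℂ) • g') p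
        = (∑ k, (f.repr pV k) • EuclideanSpace.single (ρ k) (1:ℂ)) p + (‖q‖:ℂ) * g' p := rfl
    rw [happ, hcoord]
    by_cases h0 : p.2 = e₀
    · have hgp : g' p = 0 := by
        simp only [hg']
        rw [h0]
        exact if_neg he01
      rw [hgp, mul_zero, add_zero, if_pos h0]
      by_cases h1 : p.1.1 < r'
      · rw [dif_pos ⟨h0, h1⟩]
        have hXp : f.repr pV ⟨p.1.1, h1⟩ = X p.1 := by
          simp only [hX]
          rw [dif_pos h1]
        rw [hXp, hXw]
        ring
      · rw [dif_neg (fun hh => h1 hh.2)]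
        have hX0 : X p.1 = 0 := by
          simp only [hX]
          rw [dif_neg h1]
        rw [hXw p.1] at hX0
        rw [mul_comm] at hX0
        exact hX0.symm
    · rw [if_neg h0, dif_neg (fun hh => h0 hh.1)]
      by_cases h1 : p.2 = e₁
      · rw [if_pos h1]
        have hgp : g' p = w p.1 := by
          simp only [hg']
          rw [if_pos h1]
        rw [hgp]
        ring
      · rw [if_neg h1]
        have hgp : g' p = 0 := by
          simp only [hg']
          rw [if_neg h1]
        rw [hgp]
        ring
  · -- vectors in V
    have hmem : φ i ∈ V := hVmem i hi
    apply isProduct_of_single_col _ e₀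
    intro p hp
    have hcoe : φ i = ((⟨φ i, hmem⟩ : V) : EuclideanSpace ℂ (Fin d₁ × Fin d₂)) := rfl
    rw [hcoe, hexp, hcoord]
    rw [dif_neg (fun hh => hp hh.1)]

/-- Any `m ≤ max(d₁,d₂)+1` unit vectors can be simultaneously mapped to product
states by a global unitary: no such set is absolutely entangled. -/
theorem no_AES_with_few_states (d₁ d₂ m : ℕ) (hd₁ : 2 ≤ d₁) (hd₂ : 2 ≤ d₂)
    (hm : m ≤ max d₁ d₂ + 1)
    (φ : Fin m → EuclideanSpace ℂ (Fin d₁ × Fin d₂))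
    (hunit : ∀ i, ‖φ i‖ = 1) :
    ∃ U : EuclideanSpace ℂ (Fin d₁ × Fin d₂) ≃ₗᵢ[ℂ] EuclideanSpace ℂ (Fin d₁ × Fin d₂),
      ∀ i, IsProductState d₁ d₂ (U (φ i)) := by
  rcases le_total d₂ d₁ with hle | hle
  · rw [max_eq_left hle] at hm
    exact main_aux d₁ d₂ m hd₁ hd₂ hm φ
  · rw [max_eq_right hle] at hm
    obtain ⟨sw, hsw1, hsw2⟩ :
        ∃ sw : EuclideanSpace ℂ (Fin d₁ × Fin d₂) ≃ₗᵢ[ℂ] EuclideanSpace ℂ (Fin d₂ × Fin d₁),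
          (∀ x pp, sw x pp = x (pp.2, pp.1)) ∧ (∀ ψ pp, sw.symm ψ pp = ψ (pp.2, pp.1)) :=
      ⟨LinearIsometryEquiv.piLpCongrLeft 2 ℂ ℂ (Equiv.prodComm (Fin d₁) (Fin d₂)),
        fun x pp => rfl, fun ψ pp => rfl⟩
    obtain ⟨U', hU'⟩ := main_aux d₂ d₁ m hd₂ hd₁ hm (fun i => sw (φ i))
    refine ⟨(sw.trans U').trans sw.symm, fun i => ?_⟩
    obtain ⟨x, y, hxy⟩ := hU' i
    refine ⟨y, x, fun p => ?_⟩
    have h1 : ((sw.trans U').trans sw.symm) (φ i) = sw.symm (U' (sw (φ i))) := rfl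
    rw [h1, hsw2, hxy (p.2, p.1)]
    ring
end

section
/- Let d = d₁·d₂·…·d_k with each d_i ≥ 2, let d' = max(d₁,…,d_k), and let φ₁,…,φ_{d'+1} be any d'+1 unit vectors in ℂ^d. Then there exists a unitary U ∈ U(d) such that every Uφ_i is a fully product state with respect to the k-partition ℂ^{d₁}⊗…⊗ℂ^{d_k}. Hence any absolutely entangled set for this multipartition contains at least d'+2 states. -/
open Finset
open scoped ComplexConjugate

local notation "⟪" x ", " y "⟫" => @inner ℂ _ InnerProductSpace.toInner x y

lemma sum_dite_fin {N r : ℕ} (hr : r ≤ N) (g : Fin r → ℂ) :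
    ∑ j : Fin N, (if hj : (j : ℕ) < r then g ⟨j, hj⟩ else 0) = ∑ j : Fin r, g j := by
  set G : ℕ → ℂ := fun j => if hj : j < r then g ⟨j, hj⟩ else 0 with hG
  have h1 : ∑ j : Fin N, (if hj : (j : ℕ) < r then g ⟨j, hj⟩ else 0) = ∑ j ∈ Finset.range N, G j := by
    rw [Finset.sum_range fun j => G j]
  have h2 : ∑ j ∈ Finset.range r, G j = ∑ j ∈ Finset.range N, G j := by
    apply Finset.sum_subset (Finset.range_subset_range.mpr hr)
    intro x _ hx
    simp only [Finset.mem_range, not_lt] at hx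
    simp [hG, Nat.not_lt.mpr hx]
  have h3 : ∑ j : Fin r, g j = ∑ j ∈ Finset.range r, G j := by
    rw [Finset.sum_range fun j => G j]
    apply Finset.sum_congr rfl
    intro j _
    simp [hG, j.2]
  rw [h1, ← h2, h3]

lemma gram_isometry {E : Type*} [NormedAddCommGroup E] [InnerProductSpace ℂ E]
    [FiniteDimensional ℂ E] {n : ℕ} (φ ψ : Fin n → E)
    (hgram : ∀ i j, (⟪ψ i, ψ j⟫ : ℂ) = ⟪φ i, φ j⟫) :
    ∃ U : E ≃ₗᵢ[ℂ] E, ∀ i, U (φ i) = ψ i := by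
  classical
  set V := Submodule.span ℂ (Set.range φ) with hV
  set m := Module.finrank ℂ V with hm
  have hmN : m ≤ Module.finrank ℂ E := V.finrank_le
  set b := stdOrthonormalBasis ℂ V with hb
  have hΦΨ : ∀ x y : Fin n → ℂ,
      (⟪∑ i, x i • ψ i, ∑ i, y i • ψ i⟫ : ℂ) = ⟪∑ i, x i • φ i, ∑ i, y i • φ i⟫ := by
    intro x y
    rw [sum_inner, sum_inner]
    refine Finset.sum_congr rfl fun i _ => ?_
    rw [inner_sum, inner_sum]
    refine Finset.sum_congr rfl fun j _ => ?_
    rw [inner_smul_left, inner_smul_left, inner_smul_right, inner_smul_right, hgram]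
  have heq : ∀ x y : Fin n → ℂ, (∑ i, x i • φ i) = (∑ i, y i • φ i) →
      (∑ i, x i • ψ i) = (∑ i, y i • ψ i) := by
    intro x y hxy
    have h0 : ∑ i, (x i - y i) • φ i = 0 := by
      simp [sub_smul, Finset.sum_sub_distrib, hxy]
    have h1 : (∑ i, (x i - y i) • ψ i) = 0 := by
      rw [← inner_self_eq_zero (𝕜 := ℂ), hΦΨ, h0, inner_zero_left]
    rw [← sub_eq_zero]
    simpa [sub_smul, Finset.sum_sub_distrib] using h1
  have hbmem : ∀ j : Fin m, (b j : E) ∈ Submodule.span ℂ (Set.range φ) := fun j => (b j).2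
  choose t ht using fun j : Fin m => (Submodule.mem_span_range_iff_exists_fun ℂ).mp (hbmem j)
  set c : Fin m → E := fun j => ∑ i, t j i • ψ i with hc
  have hbE : Orthonormal ℂ (fun j : Fin m => (b j : E)) := by
    rw [orthonormal_iff_ite]
    intro j l
    have hbo := b.orthonormal
    rw [orthonormal_iff_ite] at hbo
    rw [← Submodule.coe_inner]
    exact hbo j l
  have horthc : Orthonormal ℂ c := by
    rw [orthonormal_iff_ite]
    intro j l
    have : (⟪c j, c l⟫ : ℂ) = ⟪(b j : E), (b l : E)⟫ := by
      rw [hc]; dsimp only; rw [hΦΨ, ht, ht]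
    rw [this]
    have hbo := hbE
    rw [orthonormal_iff_ite] at hbo
    exact hbo j l
  set a : Fin n → Fin m → ℂ :=
    fun i j => b.repr ⟨φ i, Submodule.subset_span (Set.mem_range_self i)⟩ j with ha
  have hdecomp : ∀ i, φ i = ∑ j, a i j • (b j : E) := by
    intro i
    have h1 := congrArg (Subtype.val)
      (b.sum_repr ⟨φ i, Submodule.subset_span (Set.mem_range_self i)⟩)
    simpa using h1.symm
  have hswap : ∀ (aa : Fin m → ℂ) (v : Fin n → E),
      ∑ i, (∑ j, aa j * t j i) • v i = ∑ j, aa j • ∑ i, t j i • v i := by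
    intro aa v
    simp only [Finset.sum_smul, Finset.smul_sum, mul_smul]
    exact Finset.sum_comm
  have hsingle : ∀ (v : Fin n → E) (i : Fin n),
      ∑ l, (Pi.single i 1 : Fin n → ℂ) l • v l = v i := by
    intro v i
    simp [Pi.single_apply, ite_smul]
  have hψ : ∀ i, ψ i = ∑ j, a i j • c j := by
    intro i
    have h2 : ∑ l, (∑ j, a i j * t j l) • φ l = ∑ l, (Pi.single i 1 : Fin n → ℂ) l • φ l := by
      rw [hswap, hsingle]
      simp only [ht]
      exact (hdecomp i).symm
    have h4 := heq _ _ h2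
    rw [hsingle] at h4
    rw [← h4, hswap]
  -- extension to orthonormal bases of E
  set N := Module.finrank ℂ E with hN
  set s : Set (Fin N) := {i | (i : ℕ) < m} with hs
  set v₁ : Fin N → E := fun i => if h : (i : ℕ) < m then (b ⟨i, h⟩ : E) else 0 with hv₁def
  set v₂ : Fin N → E := fun i => if h : (i : ℕ) < m then c ⟨i, h⟩ else 0 with hv₂def
  have hg : ∀ (w : Fin m → E) (hw : Orthonormal ℂ w),
      Orthonormal ℂ (s.restrict (fun i : Fin N => if h : (i : ℕ) < m then w ⟨i, h⟩ else 0)) := by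
    intro w hw
    have : s.restrict (fun i : Fin N => if h : (i : ℕ) < m then w ⟨i, h⟩ else 0)
        = w ∘ (fun i : s => (⟨(i : Fin N), i.2⟩ : Fin m)) := by
      funext i
      simp only [Set.restrict_apply, Function.comp_apply]
      exact dif_pos i.2
    rw [this]
    exact hw.comp _ (fun i j hij =>
      Subtype.ext (Fin.val_injective (congrArg (fun x : Fin m => (x : ℕ)) hij)))
  obtain ⟨B₁, hB₁⟩ := (hg _ hbE).exists_orthonormalBasis_extension_of_card_eq (by simp [hN])
  obtain ⟨B₂, hB₂⟩ := (hg _ horthc).exists_orthonormalBasis_extension_of_card_eq (by simp [hN])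
  refine ⟨B₁.repr.trans B₂.repr.symm, ?_⟩
  have hU : ∀ j : Fin m, (B₁.repr.trans B₂.repr.symm) ((b j : E)) = c j := by
    intro j
    have hjs : (⟨(j : ℕ), lt_of_lt_of_le j.2 hmN⟩ : Fin N) ∈ s := j.2
    have e1 : B₁ ⟨(j : ℕ), lt_of_lt_of_le j.2 hmN⟩ = (b j : E) := by
      rw [hB₁ _ hjs]; exact dif_pos j.2
    have e2 : B₂ ⟨(j : ℕ), lt_of_lt_of_le j.2 hmN⟩ = c j := by
      rw [hB₂ _ hjs]; exact dif_pos j.2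
    have e3 : (B₁.repr.trans B₂.repr.symm) (B₁ ⟨(j : ℕ), lt_of_lt_of_le j.2 hmN⟩)
        = B₂ ⟨(j : ℕ), lt_of_lt_of_le j.2 hmN⟩ := by
      simp [LinearIsometryEquiv.trans_apply, OrthonormalBasis.repr_self,
        OrthonormalBasis.repr_symm_single]
    rw [← e1, e3, e2]
  intro i
  rw [hdecomp i, map_sum, hψ i]
  refine Finset.sum_congr rfl fun j _ => ?_
  rw [LinearIsometryEquiv.map_smul, hU j]

lemma ind_sum (m : ℕ) (hm : 0 < m) :
    ∑ j : Fin m, (starRingEnd ℂ) (if (j : ℕ) = 0 then 1 else 0) *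
      (if (j : ℕ) = 0 then (1 : ℂ) else 0) = 1 := by
  rw [Finset.sum_eq_single ⟨0, hm⟩]
  · simp
  · intro j _ hj
    have : (j : ℕ) ≠ 0 := fun h => hj (Fin.ext h)
    simp [this]
  · simp

lemma master {k : ℕ} (d : Fin k → ℕ) (p q : Fin k) (hqp : q ≠ p) (hd : ∀ l, 0 < d l)
    (aa aa' : Fin (d p) → ℂ) (bb bb' : Fin (d q) → ℂ)
    (x y : EuclideanSpace ℂ ((l : Fin k) → Fin (d l)))
    (hx : ∀ f, x f = ∏ l, Function.update (Function.update
        (fun (l : Fin k) (j : Fin (d l)) => if (j : ℕ) = 0 then (1:ℂ) else 0) p aa) q bb l (f l))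
    (hy : ∀ f, y f = ∏ l, Function.update (Function.update
        (fun (l : Fin k) (j : Fin (d l)) => if (j : ℕ) = 0 then (1:ℂ) else 0) p aa') q bb' l (f l)) :
    (⟪x, y⟫ : ℂ)
    = (∑ j, (starRingEnd ℂ) (aa j) * aa' j) * (∑ j, (starRingEnd ℂ) (bb j) * bb' j) := by
  classical
  set X := Function.update (Function.update
    (fun (l : Fin k) (j : Fin (d l)) => if (j : ℕ) = 0 then (1:ℂ) else 0) p aa) q bb with hX
  set X' := Function.update (Function.update
    (fun (l : Fin k) (j : Fin (d l)) => if (j : ℕ) = 0 then (1:ℂ) else 0) p aa') q bb' with hX'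
  rw [PiLp.inner_apply]
  simp only [RCLike.inner_apply']
  rw [Finset.sum_congr rfl (fun f _ => by rw [hx f, hy f])]
  have step1 : ∀ f : (l : Fin k) → Fin (d l),
      (starRingEnd ℂ) (∏ l, X l (f l)) * (∏ l, X' l (f l))
      = ∏ l, ((starRingEnd ℂ) (X l (f l)) * X' l (f l)) := by
    intro f
    rw [map_prod, ← Finset.prod_mul_distrib]
  rw [Finset.sum_congr rfl (fun f _ => step1 f)]
  have step2 : ∑ f : (l : Fin k) → Fin (d l), ∏ l, ((starRingEnd ℂ) (X l (f l)) * X' l (f l))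
      = ∏ l, ∑ j : Fin (d l), (starRingEnd ℂ) (X l j) * X' l j := by
    rw [Finset.prod_univ_sum]
    rw [← Fintype.piFinset_univ]
  rw [step2]
  have hSp : ∑ j : Fin (d p), (starRingEnd ℂ) (X p j) * X' p j
      = ∑ j, (starRingEnd ℂ) (aa j) * aa' j := by
    rw [hX, hX']
    rw [Function.update_of_ne (Ne.symm hqp) , Function.update_of_ne (Ne.symm hqp)]
    rw [Function.update_self, Function.update_self]
  have hSq : ∑ j : Fin (d q), (starRingEnd ℂ) (X q j) * X' q j
      = ∑ j, (starRingEnd ℂ) (bb j) * bb' j := by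
    rw [hX, hX', Function.update_self, Function.update_self]
  have hSo : ∀ l, l ≠ p → l ≠ q →
      ∑ j : Fin (d l), (starRingEnd ℂ) (X l j) * X' l j = 1 := by
    intro l hlp hlq
    rw [hX, hX', Function.update_of_ne hlq, Function.update_of_ne hlq,
      Function.update_of_ne hlp, Function.update_of_ne hlp]
    exact ind_sum (d l) (hd l)
  rw [← Finset.mul_prod_erase Finset.univ _ (Finset.mem_univ p),
    ← Finset.mul_prod_erase (Finset.univ.erase p) _
      (Finset.mem_erase.mpr ⟨hqp, Finset.mem_univ q⟩), hSp, hSq]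
  rw [Finset.prod_eq_one]
  · ring
  · intro l hl
    rw [Finset.mem_erase, Finset.mem_erase] at hl
    exact hSo l hl.2.1 hl.1

lemma coords_exist {E : Type*} [NormedAddCommGroup E] [InnerProductSpace ℂ E]
    [FiniteDimensional ℂ E] {D m : ℕ} (hDm : D ≤ m) (v : Fin D → E) (w : E) :
    ∃ (u : Fin D → EuclideanSpace ℂ (Fin m)) (w' : EuclideanSpace ℂ (Fin m)),
      (∀ i j, (⟪u i, u j⟫ : ℂ) = ⟪v i, v j⟫) ∧ (∀ i, (⟪u i, w'⟫ : ℂ) = ⟪v i, w⟫)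
      ∧ ‖w'‖ ≤ ‖w‖ := by
  classical
  set W := Submodule.span ℂ (Set.range v) with hW
  set r := Module.finrank ℂ W with hr
  have hrm : r ≤ m := by
    refine le_trans ?_ hDm
    have h1 := finrank_range_le_card (R := ℂ) v
    exact (by simpa using h1 : Set.finrank ℂ (Set.range v) ≤ D)
  set B0 := stdOrthonormalBasis ℂ W with hB0
  set coord : W → EuclideanSpace ℂ (Fin m) :=
    fun x => WithLp.toLp 2 (fun j => if hj : (j : ℕ) < r then B0.repr x ⟨j, hj⟩ else 0) with hcoord
  have coordinner : ∀ x y : W, (⟪coord x, coord y⟫ : ℂ) = ⟪x, y⟫ := by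
    intro x y
    rw [PiLp.inner_apply]
    simp only [RCLike.inner_apply']
    have h1 : ∀ j : Fin m, (starRingEnd ℂ) (coord x j) * coord y j
        = if hj : (j : ℕ) < r then
            (starRingEnd ℂ) (B0.repr x ⟨j, hj⟩) * B0.repr y ⟨j, hj⟩ else 0 := by
      intro j
      rw [hcoord]
      dsimp only
      split_ifs with hj <;> simp
    rw [Finset.sum_congr rfl fun j _ => h1 j,
      sum_dite_fin hrm (fun j' => (starRingEnd ℂ) (B0.repr x j') * B0.repr y j')]
    rw [← LinearIsometryEquiv.inner_map_map B0.repr x y, PiLp.inner_apply]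
    simp [RCLike.inner_apply', mul_comm]
    rfl
  have hnorm : ∀ x : W, ‖coord x‖ = ‖x‖ := by
    intro x
    have h1 := coordinner x x
    rw [inner_self_eq_norm_sq_to_K, inner_self_eq_norm_sq_to_K] at h1
    have h2 : (‖coord x‖ : ℝ) ^ 2 = (‖x‖ : ℝ) ^ 2 := by exact_mod_cast h1
    nlinarith [norm_nonneg (coord x), norm_nonneg x]
  set h0 := Submodule.orthogonalProjection W w with hh0
  refine ⟨fun i => coord ⟨v i, Submodule.subset_span (Set.mem_range_self i)⟩, coord h0,
    ?_, ?_, ?_⟩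
  · intro i j
    rw [coordinner, Submodule.coe_inner]
  · intro i
    rw [coordinner]
    have horth := Submodule.sub_starProjection_mem_orthogonal (K := W) w
    have h2 := (Submodule.mem_orthogonal W _).mp horth (v i)
      (Submodule.subset_span (Set.mem_range_self i))
    rw [inner_sub_right] at h2
    rw [Submodule.coe_inner]
    exact (sub_eq_zero.mp h2).symm
  · rw [hnorm]
    calc ‖h0‖ = ‖(Submodule.orthogonalProjection W) w‖ := rfl
      _ ≤ ‖(Submodule.orthogonalProjection W : E →L[ℂ] W)‖ * ‖w‖ := ContinuousLinearMap.le_opNorm _ _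
      _ ≤ 1 * ‖w‖ :=
          mul_le_mul_of_nonneg_right (Submodule.orthogonalProjection_norm_le W) (norm_nonneg _)
      _ = ‖w‖ := one_mul _

set_option maxHeartbeats 1000000 in
lemma main_aux_s8 {k : ℕ} (d : Fin k → ℕ) (hd : ∀ i, 2 ≤ d i) (p q : Fin k) (hqp : q ≠ p)
    (D : ℕ) (hDp : D ≤ d p)
    (φ : Fin (D + 1) → EuclideanSpace ℂ ((l : Fin k) → Fin (d l)))
    (hunit : ∀ i, ‖φ i‖ = 1) :
    ∃ U : EuclideanSpace ℂ ((l : Fin k) → Fin (d l)) ≃ₗᵢ[ℂ]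
        EuclideanSpace ℂ ((l : Fin k) → Fin (d l)),
      ∀ i, ∃ x : (l : Fin k) → (Fin (d l) → ℂ), ∀ f, U (φ i) f = ∏ l, x l (f l) := by
  classical
  have hd0 : ∀ l, 0 < d l := fun l => lt_of_lt_of_le (by norm_num) (hd l)
  set lst : Fin (D + 1) := Fin.last D with hlst
  have hidx : ∀ i : Fin (D + 1), i ≠ lst → (i : ℕ) < D := by
    intro i hi
    rcases Nat.lt_or_ge (i : ℕ) D with h | h
    · exact h
    · exfalso
      apply hi
      apply Fin.ext
      have h2 := i.2
      simp only [hlst, Fin.val_last]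
      omega
  obtain ⟨u, w', hug, huc, hw'⟩ :=
    coords_exist (m := d p) hDp (fun i : Fin D => φ i.castSucc) (φ lst)
  have hcs : ∀ (i : Fin (D + 1)) (h : i ≠ lst),
      φ ((⟨(i : ℕ), hidx i h⟩ : Fin D).castSucc) = φ i :=
    fun i h => congrArg φ (Fin.ext rfl)
  have hEp : ∀ a b : EuclideanSpace ℂ (Fin (d p)),
      ∑ j, (starRingEnd ℂ) (a j) * b j = ⟪a, b⟫ := by
    intro a b
    rw [PiLp.inner_apply]
    simp [RCLike.inner_apply', mul_comm]
  set t : ℝ := ‖w'‖ with htdef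
  have ht0 : 0 ≤ t := norm_nonneg _
  have ht1 : t ≤ 1 := by
    rw [htdef]
    calc ‖w'‖ ≤ ‖φ lst‖ := hw'
      _ = 1 := hunit lst
  have hwp2 : ∑ j, (starRingEnd ℂ) (w' j) * w' j = (t : ℂ) ^ 2 := by
    rw [hEp w' w', inner_self_eq_norm_sq_to_K, htdef]
    norm_cast
  set astar : Fin (d p) → ℂ :=
    if t = 0 then (fun j => if (j : ℕ) = 0 then 1 else 0)
    else fun j => (t : ℂ)⁻¹ * w' j with hastar
  set bstar : Fin (d q) → ℂ := fun j =>
    if (j : ℕ) = 0 then (t : ℂ)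
    else if (j : ℕ) = 1 then ((Real.sqrt (1 - t ^ 2) : ℝ) : ℂ) else 0 with hbstar
  set e0 : Fin (d q) → ℂ := fun j => if (j : ℕ) = 0 then 1 else 0 with he0
  set uu : Fin (D + 1) → Fin (d p) → ℂ :=
    fun i => if h : i = lst then astar else u ⟨(i : ℕ), hidx i h⟩ with huu
  set bb : Fin (D + 1) → Fin (d q) → ℂ := fun i => if i = lst then bstar else e0 with hbb
  set ψ : Fin (D + 1) → EuclideanSpace ℂ ((l : Fin k) → Fin (d l)) := fun i =>
    WithLp.toLp 2 (fun f => ∏ l, Function.update (Function.update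
      (fun (l : Fin k) (j : Fin (d l)) => if (j : ℕ) = 0 then (1 : ℂ) else 0)
      p (uu i)) q (bb i) l (f l)) with hψdef
  have hψapp : ∀ i, ∀ f, ψ i f = ∏ l, Function.update (Function.update
      (fun (l : Fin k) (j : Fin (d l)) => if (j : ℕ) = 0 then (1 : ℂ) else 0)
      p (uu i)) q (bb i) l (f l) := fun i f => rfl
  have hSe0e0 : ∑ j, (starRingEnd ℂ) (e0 j) * e0 j = 1 := ind_sum (d q) (hd0 q)
  have hSe0b : ∑ j, (starRingEnd ℂ) (e0 j) * bstar j = (t : ℂ) := by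
    rw [Finset.sum_eq_single (⟨0, hd0 q⟩ : Fin (d q))]
    · simp [he0, hbstar]
    · intro j _ hj
      have hj0 : (j : ℕ) ≠ 0 := fun h => hj (Fin.ext h)
      simp [he0, hj0]
    · simp
  have hSbb : ∑ j, (starRingEnd ℂ) (bstar j) * bstar j = 1 := by
    have hterm : ∀ j : Fin (d q), (starRingEnd ℂ) (bstar j) * bstar j
        = (if (j : ℕ) = 0 then ((t : ℂ) * (t : ℂ)) else 0)
          + (if (j : ℕ) = 1 then
              (((Real.sqrt (1 - t ^ 2) : ℝ) : ℂ) * ((Real.sqrt (1 - t ^ 2) : ℝ) : ℂ))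
            else 0) := by
      intro j
      rw [hbstar]
      dsimp only
      by_cases h1 : (j : ℕ) = 0
      · simp [h1, Complex.conj_ofReal]
      · by_cases h2 : (j : ℕ) = 1
        · simp [h1, h2, Complex.conj_ofReal]
        · simp [h1, h2]
    rw [Finset.sum_congr rfl fun j _ => hterm j, Finset.sum_add_distrib]
    have hs1 : ∑ j : Fin (d q), (if (j : ℕ) = 0 then ((t : ℂ) * (t : ℂ)) else 0)
        = (t : ℂ) * (t : ℂ) := by
      rw [Finset.sum_eq_single (⟨0, hd0 q⟩ : Fin (d q))]
      · simp
      · intro j _ hj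
        have hj0 : (j : ℕ) ≠ 0 := fun h => hj (Fin.ext h)
        simp [hj0]
      · simp
    have hs2 : ∑ j : Fin (d q), (if (j : ℕ) = 1 then
          (((Real.sqrt (1 - t ^ 2) : ℝ) : ℂ) * ((Real.sqrt (1 - t ^ 2) : ℝ) : ℂ)) else 0)
        = ((Real.sqrt (1 - t ^ 2) : ℝ) : ℂ) * ((Real.sqrt (1 - t ^ 2) : ℝ) : ℂ) := by
      rw [Finset.sum_eq_single (⟨1, hd q⟩ : Fin (d q))]
      · simp
      · intro j _ hj
        have hj1 : (j : ℕ) ≠ 1 := fun h => hj (Fin.ext h)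
        simp [hj1]
      · simp
    rw [hs1, hs2]
    have hsq : Real.sqrt (1 - t ^ 2) * Real.sqrt (1 - t ^ 2) = 1 - t ^ 2 :=
      Real.mul_self_sqrt (by nlinarith)
    have hc2 : (((Real.sqrt (1 - t ^ 2) : ℝ) : ℂ) * ((Real.sqrt (1 - t ^ 2) : ℝ) : ℂ))
        = ((1 : ℂ) - (t : ℂ) * (t : ℂ)) := by
      rw [← Complex.ofReal_mul, hsq]
      push_cast
      ring
    rw [hc2]
    ring
  have hunit_inner : ∀ i, (⟪φ i, φ i⟫ : ℂ) = 1 := fun i => by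
    rw [inner_self_eq_norm_sq_to_K, hunit]
    norm_num
  have hcase1 : ∀ i j, i ≠ lst → j ≠ lst → (⟪ψ i, ψ j⟫ : ℂ) = ⟪φ i, φ j⟫ := by
    intro i j hi hj
    rw [master d p q hqp hd0 (uu i) (uu j) (bb i) (bb j) (ψ i) (ψ j) (hψapp i) (hψapp j)]
    rw [hbb]
    dsimp only
    rw [if_neg hi, if_neg hj, hSe0e0, mul_one]
    rw [huu]
    dsimp only
    rw [dif_neg hi, dif_neg hj, hEp, hug, hcs i hi, hcs j hj]
  have hcase2 : ∀ i, i ≠ lst → (⟪ψ i, ψ lst⟫ : ℂ) = ⟪φ i, φ lst⟫ := by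
    intro i hi
    rw [master d p q hqp hd0 (uu i) (uu lst) (bb i) (bb lst) (ψ i) (ψ lst)
      (hψapp i) (hψapp lst)]
    rw [hbb, huu]
    dsimp only
    rw [if_neg hi, if_pos rfl, dif_neg hi, dif_pos rfl, hSe0b]
    have hcr : (⟪u ⟨(i : ℕ), hidx i hi⟩, w'⟫ : ℂ) = ⟪φ i, φ lst⟫ := by
      rw [huc, hcs i hi]
    by_cases ht : t = 0
    · have hw0 : w' = 0 := by
        rw [← norm_eq_zero (a := w'), ← htdef]
        exact ht
      rw [← hcr, hw0, inner_zero_right, ht]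
      simp
    · rw [hastar]
      dsimp only
      rw [if_neg ht]
      have hfac : ∑ j, (starRingEnd ℂ) (uu i j) * ((t : ℂ)⁻¹ * w' j)
          = (t : ℂ)⁻¹ * ∑ j, (starRingEnd ℂ) (uu i j) * w' j := by
        rw [Finset.mul_sum]
        exact Finset.sum_congr rfl fun j _ => by ring
      rw [huu] at hfac
      dsimp only at hfac
      rw [dif_neg hi] at hfac
      rw [hfac, hEp, hcr]
      have htC : (t : ℂ) ≠ 0 := by exact_mod_cast ht
      field_simp
  have hcase3 : (⟪ψ lst, ψ lst⟫ : ℂ) = ⟪φ lst, φ lst⟫ := by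
    rw [master d p q hqp hd0 (uu lst) (uu lst) (bb lst) (bb lst) (ψ lst) (ψ lst)
      (hψapp lst) (hψapp lst)]
    rw [hbb, huu]
    dsimp only
    rw [if_pos rfl, dif_pos rfl, hSbb, mul_one, hunit_inner]
    by_cases ht : t = 0
    · rw [hastar]
      dsimp only
      rw [if_pos ht]
      exact ind_sum (d p) (hd0 p)
    · rw [hastar]
      dsimp only
      rw [if_neg ht]
      have hterm : ∀ j, (starRingEnd ℂ) ((t : ℂ)⁻¹ * w' j) * ((t : ℂ)⁻¹ * w' j)
          = ((t : ℂ)⁻¹ * (t : ℂ)⁻¹) * ((starRingEnd ℂ) (w' j) * w' j) := by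
        intro j
        rw [map_mul, map_inv₀, Complex.conj_ofReal]
        ring
      rw [Finset.sum_congr rfl fun j _ => hterm j, ← Finset.mul_sum, hwp2]
      have htC : (t : ℂ) ≠ 0 := by exact_mod_cast ht
      field_simp
  have gram : ∀ i j, (⟪ψ i, ψ j⟫ : ℂ) = ⟪φ i, φ j⟫ := by
    intro i j
    by_cases hi : i = lst <;> by_cases hj : j = lst
    · subst hi; subst hj; exact hcase3
    · subst hi
      have e := congrArg (starRingEnd ℂ) (hcase2 j hj)
      rw [inner_conj_symm, inner_conj_symm] at e
      exact e
    · subst hj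
      exact hcase2 i hi
    · exact hcase1 i j hi hj
  obtain ⟨U, hU⟩ := gram_isometry φ ψ gram
  refine ⟨U, fun i => ?_⟩
  rw [hU i]
  exact ⟨_, hψapp i⟩

/-- A vector of `ℂ^{d₁} ⊗ ⋯ ⊗ ℂ^{d_k}` (coefficients in the product basis indexed
by functions `f : (i : Fin k) → Fin (d i)`) is fully product if its coefficients
factorize as a product over the parties. -/
def IsFullyProduct (k : ℕ) (d : Fin k → ℕ)
    (ψ : EuclideanSpace ℂ ((i : Fin k) → Fin (d i))) : Prop :=
  ∃ x : (i : Fin k) → (Fin (d i) → ℂ), ∀ f, ψ f = ∏ i, x i (f i)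

set_option maxHeartbeats 1000000 in
/-- For a k-partition with `d' = max d_i`, any `d'+1` unit vectors can be mapped
to fully product states by a global unitary; hence any absolutely entangled set
for this multipartition has at least `d'+2` states. -/
theorem no_multipartite_AES_with_few_states (k : ℕ) (hk : 1 ≤ k)
    (d : Fin k → ℕ) (hd : ∀ i, 2 ≤ d i)
    (φ : Fin (Finset.univ.sup d + 1) → EuclideanSpace ℂ ((i : Fin k) → Fin (d i)))
    (hunit : ∀ i, ‖φ i‖ = 1) :
    ∃ U : EuclideanSpace ℂ ((i : Fin k) → Fin (d i)) ≃ₗᵢ[ℂ]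
        EuclideanSpace ℂ ((i : Fin k) → Fin (d i)),
      ∀ i, IsFullyProduct k d (U (φ i)) := by
  classical
  rcases Nat.lt_or_ge k 2 with hk2 | hk2
  · -- k = 1 : every vector is fully product
    have hk1 : k = 1 := le_antisymm (by omega) hk
    subst hk1
    refine ⟨LinearIsometryEquiv.refl ℂ _, fun i => ?_⟩
    refine ⟨Fin.cons (fun j => φ i (Fin.cons j finZeroElim)) finZeroElim, fun f => ?_⟩
    have hf : Fin.cons (f 0) finZeroElim = f := by
      have h1 : Fin.tail f = finZeroElim := funext fun i => i.elim0
      rw [← h1, Fin.cons_self_tail]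
    simp only [Fin.prod_univ_one, Fin.cons_zero]
    rw [hf]
    rfl
  · -- k ≥ 2
    have hne : (Finset.univ : Finset (Fin k)).Nonempty := ⟨⟨0, by omega⟩, Finset.mem_univ _⟩
    obtain ⟨p, -, hD⟩ := Finset.exists_mem_eq_sup Finset.univ hne d
    have hqp : (if (p : ℕ) = 0 then (⟨1, hk2⟩ : Fin k) else ⟨0, by omega⟩) ≠ p := by
      split_ifs with h <;> intro hc <;>
        (have hval := congrArg Fin.val hc; simp only [] at hval; omega)
    exact main_aux_s8 d hd p _ hqp (Finset.univ.sup d) (le_of_eq hD) φ hunit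
end

section
/- Fix N ≥ 2 and real numbers a ∈ (0,1), B₂,…,B_N ∈ [0,1] with Σ_{i=2}^N B_i ≤ d₁ − 1 for an integer d₁ ≥ 2. Define S = Σ_{i=2}^{N} a²(1 − B_i) / (B_i + a²(1 − B_i)). Then S ≥ (N−1)(N−d₁) a² / ((d₁−1)(1−a²) + (N−1)a²), with equality (the minimum of S) attained exactly when all B_i are equal to (d₁−1)/(N−1). -/
set_option maxHeartbeats 1000000 in
lemma aux_tangent (c x t : ℝ) (hgx : x + c*(1-x) ≠ 0) (hgt : t + c*(1-t) ≠ 0) :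
    c*(1-x)/(x+c*(1-x)) - (c*(1-t)/(t+c*(1-t)) - c/(t+c*(1-t))^2 * (x-t))
      = c*(1-c)*(x-t)^2 / ((x+c*(1-x)) * (t+c*(1-t))^2) := by
  rw [eq_div_iff (by positivity)]
  field_simp
  ring

/-- Optimization step in Theorem 4: the sum `S = Σ a²(1-B_i)/(B_i + a²(1-B_i))`
subject to `B_i ∈ [0,1]` and `Σ B_i ≤ d₁-1` is minimized exactly when all
`B_i = (d₁-1)/(N-1)`. -/
theorem sum_lower_bound_symmetric_min (N d₁ : ℕ) (hN : 2 ≤ N) (hd₁ : 2 ≤ d₁)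
    (a : ℝ) (ha₀ : 0 < a) (ha₁ : a < 1)
    (B : ℕ → ℝ) (hB₀ : ∀ i ∈ Finset.Icc 2 N, 0 ≤ B i)
    (hB₁ : ∀ i ∈ Finset.Icc 2 N, B i ≤ 1)
    (hBsum : ∑ i ∈ Finset.Icc 2 N, B i ≤ (d₁ : ℝ) - 1) :
    (∑ i ∈ Finset.Icc 2 N, a ^ 2 * (1 - B i) / (B i + a ^ 2 * (1 - B i)) ≥
        ((N : ℝ) - 1) * ((N : ℝ) - d₁) * a ^ 2 /
          (((d₁ : ℝ) - 1) * (1 - a ^ 2) + ((N : ℝ) - 1) * a ^ 2)) ∧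
      ((∑ i ∈ Finset.Icc 2 N, a ^ 2 * (1 - B i) / (B i + a ^ 2 * (1 - B i)) =
          ((N : ℝ) - 1) * ((N : ℝ) - d₁) * a ^ 2 /
            (((d₁ : ℝ) - 1) * (1 - a ^ 2) + ((N : ℝ) - 1) * a ^ 2)) ↔
        ∀ i ∈ Finset.Icc 2 N, B i = ((d₁ : ℝ) - 1) / ((N : ℝ) - 1)) := by
  have hc0 : (0:ℝ) < a ^ 2 := by positivity
  have hc1 : a ^ 2 < 1 := by nlinarith
  have hN1 : (0:ℝ) < (N:ℝ) - 1 := by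
    have : (2:ℝ) ≤ N := by exact_mod_cast hN
    linarith
  have hd1 : (1:ℝ) ≤ (d₁:ℝ) - 1 := by
    have : (2:ℝ) ≤ d₁ := by exact_mod_cast hd₁
    linarith
  set c := a ^ 2 with hcdef
  set t : ℝ := ((d₁:ℝ) - 1) / ((N:ℝ) - 1) with htdef
  have htN : t * ((N:ℝ) - 1) = (d₁:ℝ) - 1 := div_mul_cancel₀ _ hN1.ne'
  have ht0 : 0 < t := div_pos (by linarith) hN1
  clear_value c t
  clear hcdef htdef
  have hgpos : ∀ x : ℝ, 0 ≤ x → 0 < x + c * (1 - x) := by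
    intro x hx
    have h : x + c * (1 - x) = x * (1 - c) + c := by ring
    rw [h]; nlinarith
  have hgt : 0 < t + c * (1 - t) := hgpos t ht0.le
  have hcard : (Finset.Icc 2 N).card = N - 1 := by
    rw [Nat.card_Icc]; omega
  have hcardR : ((Finset.Icc 2 N).card : ℝ) = (N:ℝ) - 1 := by
    rw [hcard, Nat.cast_sub (by omega)]; norm_num
  -- the constant RHS equals (N-1) * f(t)
  have hgtD : (t + c * (1 - t)) * ((N:ℝ) - 1)
      = ((d₁:ℝ) - 1) * (1 - c) + ((N:ℝ) - 1) * c := by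
    linear_combination (1 - c) * htN
  have hD : 0 < ((d₁:ℝ) - 1) * (1 - c) + ((N:ℝ) - 1) * c := by
    rw [← hgtD]; positivity
  have hRHS : ((N:ℝ) - 1) * (c * (1 - t) / (t + c * (1 - t)))
      = ((N:ℝ) - 1) * ((N:ℝ) - (d₁:ℝ)) * c
        / (((d₁:ℝ) - 1) * (1 - c) + ((N:ℝ) - 1) * c) := by
    rw [← hgtD, ← mul_div_assoc,
      div_eq_div_iff hgt.ne' (mul_ne_zero hgt.ne' hN1.ne')]
    linear_combination (-(c * (t + c * (1 - t)) * ((N:ℝ) - 1))) * htN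
  -- sum decomposition
  have key : ∀ i ∈ Finset.Icc 2 N,
      c * (1 - B i) / (B i + c * (1 - B i))
        - (c * (1 - t) / (t + c * (1 - t)) - c / (t + c * (1 - t)) ^ 2 * (B i - t))
      = c * (1 - c) * (B i - t) ^ 2
        / ((B i + c * (1 - B i)) * (t + c * (1 - t)) ^ 2) := by
    intro i hi
    exact aux_tangent c (B i) t (hgpos (B i) (hB₀ i hi)).ne' hgt.ne'
  have hST : ∑ i ∈ Finset.Icc 2 N, c * (1 - B i) / (B i + c * (1 - B i))
      - ∑ i ∈ Finset.Icc 2 N,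
          (c * (1 - t) / (t + c * (1 - t)) - c / (t + c * (1 - t)) ^ 2 * (B i - t))
      = ∑ i ∈ Finset.Icc 2 N, c * (1 - c) * (B i - t) ^ 2
          / ((B i + c * (1 - B i)) * (t + c * (1 - t)) ^ 2) := by
    rw [← Finset.sum_sub_distrib]
    exact Finset.sum_congr rfl key
  have hEterm : ∀ i ∈ Finset.Icc 2 N,
      0 ≤ c * (1 - c) * (B i - t) ^ 2
          / ((B i + c * (1 - B i)) * (t + c * (1 - t)) ^ 2) := by
    intro i hi
    have hgB := hgpos (B i) (hB₀ i hi)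
    apply div_nonneg
    · exact mul_nonneg (mul_nonneg hc0.le (by linarith)) (sq_nonneg _)
    · positivity
  have hEnn : 0 ≤ ∑ i ∈ Finset.Icc 2 N, c * (1 - c) * (B i - t) ^ 2
      / ((B i + c * (1 - B i)) * (t + c * (1 - t)) ^ 2) :=
    Finset.sum_nonneg hEterm
  have hT : ∑ i ∈ Finset.Icc 2 N,
        (c * (1 - t) / (t + c * (1 - t)) - c / (t + c * (1 - t)) ^ 2 * (B i - t))
      = ((N:ℝ) - 1) * (c * (1 - t) / (t + c * (1 - t)))
        + c / (t + c * (1 - t)) ^ 2 * (((d₁:ℝ) - 1) - ∑ i ∈ Finset.Icc 2 N, B i) := by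
    have h : ∀ i ∈ Finset.Icc 2 N,
        c * (1 - t) / (t + c * (1 - t)) - c / (t + c * (1 - t)) ^ 2 * (B i - t)
        = (c * (1 - t) / (t + c * (1 - t)) + c / (t + c * (1 - t)) ^ 2 * t)
          - c / (t + c * (1 - t)) ^ 2 * B i := by
      intro i _; ring
    rw [Finset.sum_congr rfl h, Finset.sum_sub_distrib, Finset.sum_const,
      ← Finset.mul_sum, nsmul_eq_mul, hcardR]
    linear_combination (c / (t + c * (1 - t)) ^ 2) * htN
  have hlam0 : 0 < c / (t + c * (1 - t)) ^ 2 := by positivity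
  constructor
  · have hslack : 0 ≤ c / (t + c * (1 - t)) ^ 2 * (((d₁:ℝ) - 1) - ∑ i ∈ Finset.Icc 2 N, B i) :=
      mul_nonneg hlam0.le (by linarith)
    linarith [hST, hT, hRHS, hEnn, hslack]
  · constructor
    · intro heq
      have hslack : 0 ≤ c / (t + c * (1 - t)) ^ 2 * (((d₁:ℝ) - 1) - ∑ i ∈ Finset.Icc 2 N, B i) :=
        mul_nonneg hlam0.le (by linarith)
      have hsum0 : ∑ i ∈ Finset.Icc 2 N, c * (1 - c) * (B i - t) ^ 2
          / ((B i + c * (1 - B i)) * (t + c * (1 - t)) ^ 2) = 0 := by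
        linarith [hST, hT, hRHS, hEnn, hslack]
      intro i hi
      have hterm := (Finset.sum_eq_zero_iff_of_nonneg hEterm).mp hsum0 i hi
      have hgB := hgpos (B i) (hB₀ i hi)
      have hden : (B i + c * (1 - B i)) * (t + c * (1 - t)) ^ 2 ≠ 0 := by positivity
      rw [div_eq_zero_iff] at hterm
      rcases hterm with h | h
      · have hcc : c * (1 - c) ≠ 0 := by nlinarith
        have h2 : (B i - t) ^ 2 = 0 := by
          rcases mul_eq_zero.mp h with h' | h'
          · exact absurd h' hcc
          · exact h'
        have := pow_eq_zero_iff (n := 2) (by norm_num) |>.mp h2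
        linarith [sub_eq_zero.mp this]
      · exact absurd h hden
    · intro hall
      have hs : ∑ i ∈ Finset.Icc 2 N, c * (1 - B i) / (B i + c * (1 - B i))
          = ((N:ℝ) - 1) * (c * (1 - t) / (t + c * (1 - t))) := by
        rw [Finset.sum_congr rfl (fun i hi => by rw [hall i hi]), Finset.sum_const,
          nsmul_eq_mul, hcardR]
      rw [hs, hRHS]
end
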